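/- arXiv:1412.3066 — 11 statements merged into one kernel-verified Lean document; each statement's English description precedes it below -/
import Mathlib

section
/- Every a × n latin rectangle with n > (a² - a + 1)(b - 1) contains a rainbow a × b subrectangle (a set of a rows and b columns whose ab entries are pairwise distinct), for positive integers a ≤ b. -/
/-- A latin rectangle: no repeated symbols in any row or any column. -/
def IsLatin {α β : Type*} (R : α × β → ℕ) : Prop :=
  (∀ i : α, ∀ j j' : β, R (i, j) = R (i, j') → j = j') ∧
  (∀ i i' : α, ∀ j : β, R (i, j) = R (i', j) → i = i')

/-- `R` has a rainbow `a × b` subrectangle: `a` rows and `b` columns on whose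
product `R` is injective. -/
def HasRainbow {α β : Type*} (R : α × β → ℕ) (a b : ℕ) : Prop :=
  ∃ (rows : Finset α) (cols : Finset β),
    rows.card = a ∧ cols.card = b ∧ Set.InjOn R ↑(rows ×ˢ cols)

/-! Choose the columns greedily. A column `c'` clashes with itself and, for each ordered pair
`i ≠ i'` of rows, with at most one other column `c` (the one with `R (i, c) = R (i', c')`,
unique since row `i` is latin). So `k` chosen columns rule out at most `k (a² - a + 1)` columns,
and as long as `k < b` there is a column left that shares no symbol with the chosen ones. -/

open Finset

namespace IsLatin

variable {α β : Type*} [Fintype α] [Fintype β] [DecidableEq β]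

def clashingColumns (R : α × β → ℕ) (c' : β) : Finset β :=
  insert c' ({c | ∃ i i', R (i, c) = R (i', c')} : Finset β)

variable {R : α × β → ℕ}

theorem card_clashingColumns_le (hR : IsLatin R) (c' : β) :
    #(clashingColumns R c') ≤ Fintype.card α ^ 2 - Fintype.card α + 1 := by
  let hits : α × α → Finset β := fun p => {c | R (p.1, c) = R (p.2, c')}
  have hsub : clashingColumns R c' ⊆ insert c' ((univ : Finset α).offDiag.biUnion hits) := by
    refine insert_subset (mem_insert_self _ _) fun c hc => ?_
    obtain ⟨i, i', hii'⟩ := (mem_filter.mp hc).2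
    by_cases hrows : i = i'
    · subst hrows
      exact hR.1 i c c' hii' ▸ mem_insert_self c _
    · exact mem_insert_of_mem <|
        mem_biUnion.mpr ⟨(i, i'), by simpa using hrows, by simpa [hits] using hii'⟩
  have hhits : ∀ p ∈ (univ : Finset α).offDiag, #(hits p) ≤ 1 := fun p _ =>
    card_le_one.mpr fun c₁ h₁ c₂ h₂ => by
      simp only [hits, mem_filter, mem_univ, true_and] at h₁ h₂
      exact hR.1 p.1 c₁ c₂ (h₁.trans h₂.symm)
  calc #(clashingColumns R c')
      ≤ #((univ : Finset α).offDiag.biUnion hits) + 1 :=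
        (card_le_card hsub).trans (card_insert_le _ _)
    _ ≤ #(univ : Finset α).offDiag * 1 + 1 := by
      gcongr; exact card_biUnion_le_card_mul _ _ _ hhits
    _ = Fintype.card α ^ 2 - Fintype.card α + 1 := by rw [offDiag_card, card_univ, sq, mul_one]

theorem exists_insert_injOn (hR : IsLatin R) {cols : Finset β}
    (hcols : Set.InjOn R ↑((univ : Finset α) ×ˢ cols))
    (hcard : (Fintype.card α ^ 2 - Fintype.card α + 1) * #cols < Fintype.card β) :
    ∃ c ∉ cols, Set.InjOn R ↑((univ : Finset α) ×ˢ insert c cols) := by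
  have hblocked : #(cols.biUnion (clashingColumns R)) < #(univ : Finset β) := by
    rw [card_univ]
    refine lt_of_le_of_lt ?_ hcard
    rw [mul_comm]
    exact card_biUnion_le_card_mul _ _ _ fun c' _ => hR.card_clashingColumns_le c'
  obtain ⟨c, -, hc⟩ := exists_mem_notMem_of_card_lt_card hblocked
  have hfresh : ∀ c' ∈ cols, ∀ i i', R (i, c) ≠ R (i', c') := fun c' hc' i i' h =>
    hc (mem_biUnion.mpr ⟨c', hc', mem_insert_of_mem (by simpa using ⟨i, i', h⟩)⟩)
  refine ⟨c, fun hmem => hc (mem_biUnion.mpr ⟨c, hmem, mem_insert_self c _⟩), ?_⟩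
  rintro ⟨i, d⟩ hid ⟨i', d'⟩ hid' heq
  simp only [coe_product, coe_univ, Set.mem_prod, Set.mem_univ, mem_coe, mem_insert,
    true_and] at hid hid'
  rcases hid with rfl | hd <;> rcases hid' with rfl | hd'
  · rw [hR.2 _ _ _ heq]
  · exact absurd heq (hfresh d' hd' i i')
  · exact absurd heq.symm (hfresh d hd i' i)
  · exact hcols (by simpa using hd) (by simpa using hd') heq

theorem exists_card_eq_injOn (hR : IsLatin R) (k : ℕ)
    (hk : (Fintype.card α ^ 2 - Fintype.card α + 1) * (k - 1) < Fintype.card β) :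
    ∃ cols : Finset β, #cols = k ∧ Set.InjOn R ↑((univ : Finset α) ×ˢ cols) := by
  induction k with
  | zero => exact ⟨∅, rfl, by simp⟩
  | succ k ih =>
    obtain ⟨cols, rfl, hcols⟩ :=
      ih (lt_of_le_of_lt (Nat.mul_le_mul_left _ (Nat.sub_le _ _)) hk)
    obtain ⟨c, hc, hinj⟩ := hR.exists_insert_injOn hcols (by simpa using hk)
    exact ⟨insert c cols, card_insert_of_notMem hc, hinj⟩

end IsLatin

theorem stmt_0_general (a b n : ℕ)
    (hn : (a ^ 2 - a + 1) * (b - 1) < n)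
    (R : Fin a × Fin n → ℕ) (hR : IsLatin R) :
    HasRainbow R a b := by
  obtain ⟨cols, hcard, hinj⟩ := hR.exists_card_eq_injOn b (by simpa using hn)
  exact ⟨univ, cols, by simp, hcard, hinj⟩

theorem stmt_0 (a b n : ℕ) (ha : 0 < a) (hab : a ≤ b)
    (hn : (a ^ 2 - a + 1) * (b - 1) < n)
    (R : Fin a × Fin n → ℕ) (hR : IsLatin R) :
    HasRainbow R a b :=
  stmt_0_general a b n hn R hR
end

section
/- Let R be an a × n latin rectangle, let t ≥ 1, and suppose T is a rainbow a × t subrectangle of R (given by all a rows and a set S of t columns with all entries distinct). If n - t > a·t·(a-1), then there exists a column c ∉ S such that no entry in column c equals any entry appearing in T; consequently S ∪ {c} yields a rainbow a × (t+1) subrectangle. -/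
open Finset

section

variable {α β : Type*}

theorem card_filter_shares_symbol_le [Fintype α] [DecidableEq α] [Fintype β] [DecidableEq β]
    (R : α × β → ℕ) (hrow : ∀ i j j', R (i, j) = R (i, j') → j = j') (S : Finset β) :
    #{c ∈ Sᶜ | ∃ i i', ∃ j ∈ S, R (i, c) = R (i', j)}
      ≤ Fintype.card α * #S * (Fintype.card α - 1) := by
  have hsub : {c ∈ Sᶜ | ∃ i i', ∃ j ∈ S, R (i, c) = R (i', j)} ⊆
      (univ.offDiag ×ˢ S).biUnion fun p : (α × α) × β =>
        {c | R (p.1.1, c) = R (p.1.2, p.2)} := by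
    intro c hc
    simp only [mem_filter, mem_compl] at hc
    obtain ⟨hcS, i, i', j, hj, hij⟩ := hc
    have hii' : i ≠ i' := by
      rintro rfl
      exact hcS (hrow _ _ _ hij ▸ hj)
    exact mem_biUnion.mpr ⟨((i, i'), j), by simp [hii', hj], by simp [hij]⟩
  calc _ ≤ #((univ.offDiag ×ˢ S).biUnion fun p : (α × α) × β =>
          {c | R (p.1.1, c) = R (p.1.2, p.2)}) := card_le_card hsub
    _ ≤ #(univ.offDiag ×ˢ S) * 1 := by
      refine card_biUnion_le_card_mul _ _ _ fun p _ => card_le_one.mpr fun c hc c' hc' => ?_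
      exact hrow _ _ _ ((mem_filter.1 hc).2.trans (mem_filter.1 hc').2.symm)
    _ = Fintype.card α * #S * (Fintype.card α - 1) := by
      rw [mul_one, card_product, offDiag_card, card_univ, ← Nat.mul_sub_one]
      ring

theorem injOn_prod_insert [DecidableEq β] (R : α × β → ℕ)
    (hcol : ∀ i i' j, R (i, j) = R (i', j) → i = i') {rows : Finset α} {S : Finset β} {c : β}
    (hT : Set.InjOn R ↑(rows ×ˢ S)) (hc : ∀ i i', ∀ j ∈ S, R (i, c) ≠ R (i', j)) :
    Set.InjOn R ↑(rows ×ˢ insert c S) := by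
  rintro ⟨i, j⟩ hij ⟨i', j'⟩ hij' heq
  simp only [coe_product, Set.mem_prod, mem_coe, mem_insert] at hij hij'
  obtain ⟨hi, rfl | hj⟩ := hij <;> obtain ⟨hi', rfl | hj'⟩ := hij'
  · exact Prod.ext (hcol _ _ _ heq) rfl
  · exact absurd heq (hc i i' j' hj')
  · exact absurd heq.symm (hc i' i j hj)
  · exact hT (by simp [hi, hj]) (by simp [hi', hj']) heq

end

theorem stmt_1_general (a n t : ℕ)
    (R : Fin a × Fin n → ℕ) (hR : IsLatin R)
    (S : Finset (Fin n)) (hS : S.card = t)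
    (hT : Set.InjOn R ↑((Finset.univ : Finset (Fin a)) ×ˢ S))
    (hn : a * t * (a - 1) < n - t) :
    ∃ c : Fin n, c ∉ S ∧
      (∀ i i' : Fin a, ∀ j ∈ S, R (i, c) ≠ R (i', j)) ∧
      Set.InjOn R ↑((Finset.univ : Finset (Fin a)) ×ˢ insert c S) := by
  obtain ⟨hrow, hcol⟩ := hR
  have hbad := card_filter_shares_symbol_le R hrow S
  rw [Fintype.card_fin, hS] at hbad
  have hcompl : #Sᶜ = n - t := by rw [card_compl, Fintype.card_fin, hS]
  obtain ⟨c, hcS, hc⟩ := exists_mem_notMem_of_card_lt_card (hbad.trans_lt (hcompl ▸ hn))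
  have hgood : ∀ i i' : Fin a, ∀ j ∈ S, R (i, c) ≠ R (i', j) := by
    simpa [mem_filter, hcS] using hc
  exact ⟨c, mem_compl.mp hcS, hgood, injOn_prod_insert R hcol hT hgood⟩

theorem stmt_1 (a n t : ℕ) (ht : 1 ≤ t)
    (R : Fin a × Fin n → ℕ) (hR : IsLatin R)
    (S : Finset (Fin n)) (hS : S.card = t)
    (hT : Set.InjOn R ↑((Finset.univ : Finset (Fin a)) ×ˢ S))
    (hn : a * t * (a - 1) < n - t) :
    ∃ c : Fin n, c ∉ S ∧
      (∀ i i' : Fin a, ∀ j ∈ S, R (i, c) ≠ R (i', j)) ∧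
      Set.InjOn R ↑((Finset.univ : Finset (Fin a)) ×ˢ insert c S) :=
  stmt_1_general a n t R hR S hS hT hn
end

section
/- For positive integers a ≤ b, m with a ≤ m ≤ n and n > (a² - a + 1)(b - 1), every m × n latin rectangle contains a rainbow a × b subrectangle. -/
open Finset

section Conflicts

variable {α β : Type*} [Fintype β] [DecidableEq β] (R : α × β → ℕ) (rows : Finset α)

def columnConflicts (j : β) : Finset β :=
  insert j (rows.offDiag.biUnion fun p => univ.filter fun j' => R (p.1, j) = R (p.2, j'))

variable {R rows}

theorem self_mem_columnConflicts (j : β) : j ∈ columnConflicts R rows j :=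
  mem_insert_self _ _

theorem card_columnConflicts_le (hR : IsLatin R) (j : β) :
    #(columnConflicts R rows j) ≤ #rows ^ 2 - #rows + 1 := by
  have hunique : ∀ p ∈ rows.offDiag,
      #(univ.filter fun j' => R (p.1, j) = R (p.2, j')) ≤ 1 := by
    intro p _
    refine card_le_one.mpr fun x hx y hy => ?_
    simp only [mem_filter, mem_univ, true_and] at hx hy
    exact hR.1 p.2 x y (hx.symm.trans hy)
  calc #(columnConflicts R rows j)
      ≤ #(rows.offDiag.biUnion fun p => univ.filter fun j' => R (p.1, j) = R (p.2, j')) + 1 :=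
        card_insert_le _ _
    _ ≤ #rows.offDiag * 1 + 1 := by grw [card_biUnion_le_card_mul _ _ 1 hunique]
    _ = #rows ^ 2 - #rows + 1 := by rw [offDiag_card, mul_one, sq]

theorem ne_of_notMem_columnConflicts (hR : IsLatin R) {i i' : α} (hi : i ∈ rows)
    (hi' : i' ∈ rows) {j j' : β} (hj' : j' ∉ columnConflicts R rows j) :
    R (i, j) ≠ R (i', j') := by
  intro heq
  by_cases hii' : i = i'
  · subst hii'
    exact hj' (hR.1 i j j' heq ▸ self_mem_columnConflicts j)
  · refine hj' (mem_insert_of_mem (mem_biUnion.mpr ⟨(i, i'), ?_, ?_⟩))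
    · exact mem_offDiag.mpr ⟨hi, hi', hii'⟩
    · simpa using heq

theorem injOn_insert_of_notMem_columnConflicts (hR : IsLatin R) {cols : Finset β} {j₀ : β}
    (hcols : Set.InjOn R ↑(rows ×ˢ cols))
    (hj₀ : j₀ ∉ cols.biUnion (columnConflicts R rows)) :
    Set.InjOn R ↑(rows ×ˢ insert j₀ cols) := by
  have hfree : ∀ j ∈ cols, j₀ ∉ columnConflicts R rows j := fun j hj h =>
    hj₀ (mem_biUnion.mpr ⟨j, hj, h⟩)
  rintro ⟨i, j⟩ hp ⟨i', j'⟩ hq heq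
  simp only [coe_product, coe_insert, Set.mem_prod, Set.mem_insert_iff, mem_coe] at hp hq
  obtain ⟨hi, rfl | hj⟩ := hp <;> obtain ⟨hi', rfl | hj'⟩ := hq
  · rw [hR.2 i i' _ heq]
  · exact absurd heq.symm (ne_of_notMem_columnConflicts hR hi' hi (hfree j' hj'))
  · exact absurd heq (ne_of_notMem_columnConflicts hR hi hi' (hfree j hj))
  · exact hcols (by simp [hi, hj]) (by simp [hi', hj']) heq

theorem exists_injOn_product_of_lt (hR : IsLatin R) (k : ℕ)
    (hk : (k - 1) * (#rows ^ 2 - #rows + 1) < Fintype.card β) :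
    ∃ cols : Finset β, #cols = k ∧ Set.InjOn R ↑(rows ×ˢ cols) := by
  induction k with
  | zero => exact ⟨∅, rfl, by simp⟩
  | succ k ih =>
    obtain ⟨cols, hcard, hcols⟩ :=
      ih (lt_of_le_of_lt (Nat.mul_le_mul_right _ (by omega)) hk)
    have hsmall : #(cols.biUnion (columnConflicts R rows)) < #(univ : Finset β) :=
      calc #(cols.biUnion (columnConflicts R rows))
          ≤ #cols * (#rows ^ 2 - #rows + 1) :=
            card_biUnion_le_card_mul _ _ _ fun j _ => card_columnConflicts_le hR j
        _ < #(univ : Finset β) := by simpa [hcard] using hk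
    obtain ⟨j₀, -, hj₀⟩ := exists_mem_notMem_of_card_lt_card hsmall
    have hj₀cols : j₀ ∉ cols := fun h => hj₀ (mem_biUnion.mpr ⟨j₀, h, self_mem_columnConflicts j₀⟩)
    exact ⟨insert j₀ cols, by rw [card_insert_of_notMem hj₀cols, hcard],
      injOn_insert_of_notMem_columnConflicts hR hcols hj₀⟩

end Conflicts

theorem IsLatin.hasRainbow {α β : Type*} [Fintype α] [Fintype β] {R : α × β → ℕ}
    (hR : IsLatin R) {a b : ℕ} (ha : a ≤ Fintype.card α)
    (hb : (a ^ 2 - a + 1) * (b - 1) < Fintype.card β) : HasRainbow R a b := by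
  classical
  obtain ⟨rows, -, hrows⟩ := exists_subset_card_eq (s := (univ : Finset α)) (n := a) ha
  obtain ⟨cols, hcols, hinj⟩ :=
    exists_injOn_product_of_lt (rows := rows) hR b (by rwa [hrows, mul_comm])
  exact ⟨rows, cols, hrows, hcols, hinj⟩

theorem stmt_2_general (a b m n : ℕ) (ham : a ≤ m)
    (hn : (a ^ 2 - a + 1) * (b - 1) < n)
    (R : Fin m × Fin n → ℕ) (hR : IsLatin R) :
    HasRainbow R a b :=
  hR.hasRainbow (by simpa using ham) (by simpa using hn)

theorem stmt_2 (a b m n : ℕ) (ha : 0 < a) (hab : a ≤ b) (ham : a ≤ m) (hmn : m ≤ n)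
    (hn : (a ^ 2 - a + 1) * (b - 1) < n)
    (R : Fin m × Fin n → ℕ) (hR : IsLatin R) :
    HasRainbow R a b :=
  stmt_2_general a b m n ham hn R hR
end

section
/- If there exists an a × (a² - a + 1) latin rectangle with no rainbow a × 2 subrectangle, then any two distinct columns of this rectangle, viewed as a-element sets of symbols, intersect in exactly one symbol. -/
/-!
Fix a column `c`. Each of the other `a² - a` columns meets `c`, since two disjoint columns form
a rainbow `a × 2` subrectangle. On the other hand a common symbol of `c` and `j` sits in some
row `i` of `c` and some row `i' ≠ i` of `j`, and the pair `(i, i')` determines `j` because a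
row has no repeated symbol; so the intersections with `c` have at most `a² - a` elements in
total. Hence each of them is a single symbol.
-/

open Finset

variable {α β : Type*} [Fintype α] {R : α × β → ℕ}

def colSymbols (R : α × β → ℕ) (j : β) : Finset ℕ :=
  univ.image fun i => R (i, j)

def matchingRows (R : α × β → ℕ) (c j : β) : Finset (α × α) :=
  univ.filter fun p => R (p.1, c) = R (p.2, j)

theorem mem_colSymbols (i : α) (j : β) : R (i, j) ∈ colSymbols R j :=
  mem_image_of_mem _ (mem_univ i)

namespace IsLatin

theorem hasRainbow_of_disjoint (hR : IsLatin R) {j j' : β} (hjj' : j ≠ j')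
    (hd : Disjoint (colSymbols R j) (colSymbols R j')) :
    HasRainbow R (Fintype.card α) 2 := by
  classical
  refine ⟨univ, {j, j'}, card_univ, card_pair hjj', ?_⟩
  rintro ⟨i₁, k₁⟩ h₁ ⟨i₂, k₂⟩ h₂ heq
  simp only [coe_product, Set.mem_prod, mem_coe, mem_insert, mem_singleton] at h₁ h₂
  obtain rfl | hk := eq_or_ne k₁ k₂
  · exact Prod.ext (hR.2 _ _ _ heq) rfl
  · have hd' : Disjoint (colSymbols R k₁) (colSymbols R k₂) := by
      rcases h₁.2 with rfl | rfl <;> rcases h₂.2 with rfl | rfl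
      exacts [absurd rfl hk, hd, hd.symm, absurd rfl hk]
    exact absurd (heq ▸ mem_colSymbols i₂ k₂) (disjoint_left.1 hd' (mem_colSymbols i₁ k₁))

theorem card_matchingRows (hR : IsLatin R) (c j : β) :
    #(matchingRows R c j) = #(colSymbols R c ∩ colSymbols R j) := by
  refine card_bij (fun p _ => R (p.1, c)) ?_ ?_ ?_
  · intro p hp
    rw [matchingRows, mem_filter] at hp
    exact mem_inter.2 ⟨mem_colSymbols _ _, hp.2 ▸ mem_colSymbols _ _⟩
  · intro p hp q hq hpq
    rw [matchingRows, mem_filter] at hp hq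
    have h₁ : p.1 = q.1 := hR.2 _ _ _ hpq
    have h₂ : p.2 = q.2 := hR.2 _ _ _ (hp.2.symm.trans (hpq.trans hq.2))
    exact Prod.ext h₁ h₂
  · intro s hs
    obtain ⟨hc, hj⟩ := mem_inter.1 hs
    obtain ⟨i, -, rfl⟩ := mem_image.1 hc
    obtain ⟨i', -, hi'⟩ := mem_image.1 hj
    exact ⟨(i, i'), by simp [matchingRows, hi'], rfl⟩

theorem matchingRows_subset_offDiag (hR : IsLatin R) {c j : β} (hcj : c ≠ j) :
    matchingRows R c j ⊆ univ.offDiag := by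
  intro p hp
  rw [matchingRows, mem_filter] at hp
  simp only [mem_offDiag, mem_univ, true_and]
  intro hp'
  exact hcj (hR.1 p.1 c j (hp' ▸ hp.2))

theorem pairwiseDisjoint_matchingRows (hR : IsLatin R) (c : β) (s : Set β) :
    s.PairwiseDisjoint (matchingRows R c) := by
  intro j _ j' _ hjj'
  refine disjoint_left.2 fun p hp hp' => hjj' ?_
  rw [matchingRows, mem_filter] at hp hp'
  exact hR.1 p.2 j j' (hp.2.symm.trans hp'.2)

theorem sum_card_inter_colSymbols_le [DecidableEq α] [Fintype β] [DecidableEq β]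
    (hR : IsLatin R) (c : β) :
    ∑ j ∈ univ.erase c, #(colSymbols R c ∩ colSymbols R j) ≤
      Fintype.card α * Fintype.card α - Fintype.card α := by
  calc ∑ j ∈ univ.erase c, #(colSymbols R c ∩ colSymbols R j)
      = ∑ j ∈ univ.erase c, #(matchingRows R c j) := by
        simp only [card_matchingRows hR]
    _ = #((univ.erase c).biUnion (matchingRows R c)) :=
        (card_biUnion (pairwiseDisjoint_matchingRows hR c _)).symm
    _ ≤ #(univ : Finset α).offDiag :=
        card_le_card <| biUnion_subset.2 fun j hj =>
          matchingRows_subset_offDiag hR (ne_of_mem_erase hj).symm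
    _ = Fintype.card α * Fintype.card α - Fintype.card α := by
        rw [offDiag_card, card_univ]

theorem card_inter_colSymbols_eq_one [Fintype β] (hR : IsLatin R)
    (hnr : ¬ HasRainbow R (Fintype.card α) 2)
    (hβ : Fintype.card α * Fintype.card α - Fintype.card α < Fintype.card β)
    {c c' : β} (hcc' : c ≠ c') :
    #(colSymbols R c ∩ colSymbols R c') = 1 := by
  classical
  have hmeet : ∀ j ∈ univ.erase c, 1 ≤ #(colSymbols R c ∩ colSymbols R j) := fun j hj =>
    card_pos.2 <| not_disjoint_iff_nonempty_inter.1 fun hd =>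
      hnr (hasRainbow_of_disjoint hR (ne_of_mem_erase hj).symm hd)
  have hsum :
      ∑ j ∈ univ.erase c, 1 = ∑ j ∈ univ.erase c, #(colSymbols R c ∩ colSymbols R j) := by
    refine le_antisymm (sum_le_sum hmeet) ((sum_card_inter_colSymbols_le hR c).trans ?_)
    rw [sum_const, smul_eq_mul, mul_one, card_erase_of_mem (mem_univ c), card_univ]
    omega
  exact ((sum_eq_sum_iff_of_le hmeet).1 hsum c' (mem_erase.2 ⟨hcc'.symm, mem_univ c'⟩)).symm

end IsLatin

theorem stmt_3_general (a : ℕ)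
    (R : Fin a × Fin (a ^ 2 - a + 1) → ℕ) (hR : IsLatin R)
    (hnr : ¬ HasRainbow R a 2) :
    ∀ c c' : Fin (a ^ 2 - a + 1), c ≠ c' →
      ((Finset.univ.image fun i => R (i, c)) ∩
        (Finset.univ.image fun i => R (i, c'))).card = 1 := by
  intro c c' hcc'
  refine hR.card_inter_colSymbols_eq_one (by rwa [Fintype.card_fin]) ?_ hcc'
  simp only [Fintype.card_fin, sq]
  omega

theorem stmt_3 (a : ℕ) (ha : 0 < a)
    (R : Fin a × Fin (a ^ 2 - a + 1) → ℕ) (hR : IsLatin R)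
    (hnr : ¬ HasRainbow R a 2) :
    ∀ c c' : Fin (a ^ 2 - a + 1), c ≠ c' →
      ((Finset.univ.image fun i => R (i, c)) ∩
        (Finset.univ.image fun i => R (i, c'))).card = 1 :=
  stmt_3_general a R hR hnr
end

section
/- If there exists an a × (a² - a + 1) latin rectangle with no rainbow a × 2 subrectangle, then every symbol appearing in the rectangle appears in exactly a distinct columns. -/
open Finset

def symbolColumns {α β : Type*} [Fintype α] [Fintype β] (R : α × β → ℕ) (s : ℕ) :
    Finset β :=
  {c | ∃ i, R (i, c) = s}

theorem Finset.card_eq_of_subset_biUnion {ι κ : Type*} [Fintype ι] [DecidableEq κ]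
    {s : Finset κ} {T : ι → Finset κ} {m : ℕ} (hT : ∀ i, #(T i) ≤ m)
    (hs : s ⊆ univ.biUnion T) (hcard : Fintype.card ι * m ≤ #s) (i : ι) : #(T i) = m := by
  by_contra hi
  have hlt : ∑ j, #(T j) < ∑ _j : ι, m :=
    sum_lt_sum (fun j _ => hT j) ⟨i, mem_univ i, lt_of_le_of_ne (hT i) hi⟩
  have hcover : #s ≤ ∑ j, #(T j) := (card_le_card hs).trans card_biUnion_le
  simp only [sum_const, card_univ, smul_eq_mul] at hlt
  omega

namespace IsLatin

variable {α β : Type*} [Fintype α] {R : α × β → ℕ}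

theorem card_symbolColumns_le [Fintype β] (hR : IsLatin R) (s : ℕ) :
    #(symbolColumns R s) ≤ Fintype.card α := by
  classical
  let P : Finset (α × β) := {p | R p = s}
  have hcols : symbolColumns R s = P.image Prod.snd := by
    ext c
    simp [symbolColumns, P]
  have hrows : Set.InjOn Prod.fst (P : Set (α × β)) := by
    rintro ⟨i, c⟩ hp ⟨i', c'⟩ hp' (rfl : i = i')
    simp only [coe_filter, mem_univ, true_and, Set.mem_ofPred_eq, P] at hp hp'
    rw [hR.1 i c c' (hp.trans hp'.symm)]
  calc #(symbolColumns R s) ≤ #P := hcols ▸ card_image_le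
    _ = #(P.image Prod.fst) := (card_image_of_injOn hrows).symm
    _ ≤ Fintype.card α := card_le_univ _

theorem hasRainbow_of_disjoint_columns [DecidableEq β] (hR : IsLatin R) {c c' : β}
    (hcc' : c ≠ c') (hdisj : ∀ i i', R (i, c) ≠ R (i', c')) :
    HasRainbow R (Fintype.card α) 2 := by
  refine ⟨univ, {c, c'}, card_univ, card_pair hcc', ?_⟩
  rintro ⟨i, d⟩ hd ⟨i', d'⟩ hd' heq
  simp only [coe_product, coe_univ, Set.mem_prod, Set.mem_univ, coe_insert, coe_singleton,
    Set.mem_insert_iff, Set.mem_singleton_iff, true_and] at hd hd'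
  rcases hd with rfl | rfl <;> rcases hd' with rfl | rfl
  · rw [hR.2 i i' _ heq]
  · exact absurd heq (hdisj i i')
  · exact absurd heq.symm (hdisj i' i)
  · rw [hR.2 i i' _ heq]

theorem card_symbolColumns_eq [Fintype β] (hR : IsLatin R)
    (hnr : ¬ HasRainbow R (Fintype.card α) 2)
    (hβ : Fintype.card α * (Fintype.card α - 1) < Fintype.card β) {s : ℕ}
    (hs : ∃ p, R p = s) :
    #(symbolColumns R s) = Fintype.card α := by
  classical
  obtain ⟨⟨i₀, c₀⟩, rfl⟩ := hs
  have hc₀ (t : α) : c₀ ∈ symbolColumns R (R (t, c₀)) := by simp [symbolColumns]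
  let T (t : α) := (symbolColumns R (R (t, c₀))).erase c₀
  have hT (t : α) : #(T t) ≤ Fintype.card α - 1 := by
    rw [card_erase_of_mem (hc₀ t)]
    exact Nat.sub_le_sub_right (hR.card_symbolColumns_le _) 1
  have hcover : univ.erase c₀ ⊆ univ.biUnion T := by
    intro c hc
    have hne : c ≠ c₀ := (mem_erase.mp hc).1
    by_contra hnot
    refine hnr (hR.hasRainbow_of_disjoint_columns hne fun i t heq => hnot ?_)
    have hcol : c ∈ symbolColumns R (R (t, c₀)) := by simp [symbolColumns, ← heq]
    exact mem_biUnion.mpr ⟨t, mem_univ t, mem_erase.mpr ⟨hne, hcol⟩⟩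
  have hcard : Fintype.card α * (Fintype.card α - 1) ≤ #(univ.erase c₀) := by
    rw [card_erase_of_mem (mem_univ c₀), card_univ]
    omega
  have hi₀ := card_eq_of_subset_biUnion hT hcover hcard i₀
  rw [card_erase_of_mem (hc₀ i₀)] at hi₀
  have hpos : 0 < #(symbolColumns R (R (i₀, c₀))) := card_pos.mpr ⟨c₀, hc₀ i₀⟩
  have ha : 0 < Fintype.card α := Fintype.card_pos_iff.mpr ⟨i₀⟩
  omega

end IsLatin

theorem stmt_4_general (a : ℕ)
    (R : Fin a × Fin (a ^ 2 - a + 1) → ℕ) (hR : IsLatin R)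
    (hnr : ¬ HasRainbow R a 2) :
    ∀ s : ℕ, (∃ p, R p = s) →
      (Finset.univ.filter fun c : Fin (a ^ 2 - a + 1) =>
        ∃ i : Fin a, R (i, c) = s).card = a := by
  intro s hs
  have hβ : a * (a - 1) < a ^ 2 - a + 1 := by
    rw [Nat.mul_sub_one, sq]
    omega
  have h := hR.card_symbolColumns_eq (by simpa using hnr) (by simpa using hβ) hs
  rw [Fintype.card_fin] at h
  convert h using 2
  ext
  simp [symbolColumns]

theorem stmt_4 (a : ℕ) (ha : 0 < a)
    (R : Fin a × Fin (a ^ 2 - a + 1) → ℕ) (hR : IsLatin R)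
    (hnr : ¬ HasRainbow R a 2) :
    ∀ s : ℕ, (∃ p, R p = s) →
      (Finset.univ.filter fun c : Fin (a ^ 2 - a + 1) =>
        ∃ i : Fin a, R (i, c) = s).card = a :=
  stmt_4_general a R hR hnr
end

section
/- If there exists an a × (a² - a + 1) latin rectangle with no rainbow a × 2 subrectangle, then the set of symbols appearing in the rectangle, together with the columns viewed as a-element sets of symbols, forms a projective plane of order a - 1: there are a² - a + 1 symbols, each column (line) contains a symbols, any two distinct columns meet in exactly one symbol, and any two distinct symbols lie in a common column. -/
open Finset

section LineFamily

variable {ι α : Type*} [Fintype ι] [DecidableEq α]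

def pencil (L : ι → Finset α) (x : α) : Finset ι :=
  univ.filter fun i => x ∈ L i

@[simp]
theorem mem_pencil {L : ι → Finset α} {x : α} {i : ι} : i ∈ pencil L x ↔ x ∈ L i := by
  simp [pencil]

theorem sum_card_inter_eq_sum_card_pencil_erase [DecidableEq ι] (L : ι → Finset α) (i : ι) :
    ∑ j ∈ univ.erase i, #(L i ∩ L j) = ∑ x ∈ L i, #((pencil L x).erase i) := by
  have h := sum_card_bipartiteAbove_eq_sum_card_bipartiteBelow
    (s := L i) (t := univ.erase i) (r := fun x j => x ∈ L j)
  simp only [bipartiteBelow, filter_mem_eq_inter] at h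
  rw [← h]
  refine sum_congr rfl fun x _ => congrArg card ?_
  ext j
  simp [bipartiteAbove, and_comm]

theorem card_pencil_erase_le [DecidableEq ι] {L : ι → Finset α} {k : ℕ}
    (hpencil : ∀ x, #(pencil L x) ≤ k) {i : ι} {x : α} (hx : x ∈ L i) :
    #((pencil L x).erase i) ≤ k - 1 := by
  rw [card_erase_of_mem (mem_pencil.mpr hx)]
  exact Nat.sub_le_sub_right (hpencil x) 1

theorem sum_card_inter_erase_eq [DecidableEq ι] {L : ι → Finset α} {k : ℕ}
    (hL : ∀ i, #(L i) = k) (hpencil : ∀ x, #(pencil L x) ≤ k)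
    (hmeet : Pairwise fun i j => (L i ∩ L j).Nonempty) (hι : Fintype.card ι = k * (k - 1) + 1)
    (i : ι) : ∑ j ∈ univ.erase i, #(L i ∩ L j) = k * (k - 1) := by
  apply le_antisymm
  · calc ∑ j ∈ univ.erase i, #(L i ∩ L j)
        = ∑ x ∈ L i, #((pencil L x).erase i) := sum_card_inter_eq_sum_card_pencil_erase L i
      _ ≤ ∑ _x ∈ L i, (k - 1) := sum_le_sum fun _ hx => card_pencil_erase_le hpencil hx
      _ = k * (k - 1) := by rw [sum_const, hL, smul_eq_mul]
  · calc k * (k - 1) = ∑ _j ∈ univ.erase i, 1 := by simp [card_erase_of_mem, hι]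
      _ ≤ ∑ j ∈ univ.erase i, #(L i ∩ L j) := sum_le_sum fun j hj =>
          card_pos.mpr (hmeet (ne_of_mem_erase hj).symm)

theorem card_inter_eq_one [DecidableEq ι] {L : ι → Finset α} {k : ℕ}
    (hL : ∀ i, #(L i) = k) (hpencil : ∀ x, #(pencil L x) ≤ k)
    (hmeet : Pairwise fun i j => (L i ∩ L j).Nonempty) (hι : Fintype.card ι = k * (k - 1) + 1)
    {i j : ι} (hij : i ≠ j) : #(L i ∩ L j) = 1 := by
  have hsum : ∑ _j ∈ univ.erase i, 1 = ∑ j ∈ univ.erase i, #(L i ∩ L j) := by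
    simp [sum_card_inter_erase_eq hL hpencil hmeet hι, card_erase_of_mem, hι]
  rw [sum_eq_sum_iff_of_le fun j hj => card_pos.mpr (hmeet (ne_of_mem_erase hj).symm)] at hsum
  exact (hsum j (mem_erase.mpr ⟨hij.symm, mem_univ j⟩)).symm

theorem card_pencil_eq [DecidableEq ι] {L : ι → Finset α} {k : ℕ}
    (hL : ∀ i, #(L i) = k) (hpencil : ∀ x, #(pencil L x) ≤ k)
    (hmeet : Pairwise fun i j => (L i ∩ L j).Nonempty) (hι : Fintype.card ι = k * (k - 1) + 1)
    {i : ι} {x : α} (hx : x ∈ L i) : #(pencil L x) = k := by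
  have hsum : ∑ x ∈ L i, #((pencil L x).erase i) = ∑ _x ∈ L i, (k - 1) := by
    rw [← sum_card_inter_eq_sum_card_pencil_erase, sum_card_inter_erase_eq hL hpencil hmeet hι,
      sum_const, hL, smul_eq_mul]
  rw [sum_eq_sum_iff_of_le fun _ hy => card_pencil_erase_le hpencil hy] at hsum
  have hx' := hsum x hx
  rw [card_erase_of_mem (mem_pencil.mpr hx)] at hx'
  have hpos := card_pos.mpr ⟨i, mem_pencil.mpr hx⟩
  have := hpencil x
  omega

theorem card_biUnion_eq_card [DecidableEq ι] {L : ι → Finset α} {k : ℕ} (hk : 0 < k)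
    (hL : ∀ i, #(L i) = k) (hpencil : ∀ x, #(pencil L x) ≤ k)
    (hmeet : Pairwise fun i j => (L i ∩ L j).Nonempty) (hι : Fintype.card ι = k * (k - 1) + 1) :
    #(univ.biUnion L) = Fintype.card ι := by
  have h := sum_card_bipartiteAbove_eq_sum_card_bipartiteBelow
    (s := univ) (t := univ.biUnion L) (r := fun i x => x ∈ L i)
  have hline : ∀ i, (univ.biUnion L).bipartiteAbove (fun i x => x ∈ L i) i = L i := fun i =>
    (filter_mem_eq_inter).trans (inter_eq_right.mpr (subset_biUnion_of_mem L (mem_univ i)))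
  change ∑ i, #(_) = ∑ x ∈ univ.biUnion L, #(pencil L x) at h
  have hdeg : ∀ x ∈ univ.biUnion L, #(pencil L x) = k := fun x hx => by
    obtain ⟨i, -, hxi⟩ := mem_biUnion.mp hx
    exact card_pencil_eq hL hpencil hmeet hι hxi
  simp only [hline, hL, sum_congr rfl hdeg, sum_const, card_univ, smul_eq_mul] at h
  exact (Nat.eq_of_mul_eq_mul_right hk h).symm

theorem exists_mem_mem_of_ne [DecidableEq ι] {L : ι → Finset α} {k : ℕ} (hk : 0 < k)
    (hL : ∀ i, #(L i) = k) (hpencil : ∀ x, #(pencil L x) ≤ k)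
    (hmeet : Pairwise fun i j => (L i ∩ L j).Nonempty) (hι : Fintype.card ι = k * (k - 1) + 1)
    {x y : α} (hx : x ∈ univ.biUnion L) (hy : y ∈ univ.biUnion L) (hxy : x ≠ y) :
    ∃ i, x ∈ L i ∧ y ∈ L i := by
  obtain ⟨i₀, -, hxi₀⟩ := mem_biUnion.mp hx
  -- two lines through `x` share no other point, so those lines cover `1 + k(k-1)` points
  have hdisj : (pencil L x : Set ι).PairwiseDisjoint fun i => (L i).erase x := by
    intro i hi j hj hij
    refine disjoint_left.mpr fun z hzi hzj => ne_of_mem_erase hzi ?_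
    exact card_le_one.mp (card_inter_eq_one hL hpencil hmeet hι hij).le z
      (mem_inter.mpr ⟨mem_of_mem_erase hzi, mem_of_mem_erase hzj⟩) x
      (mem_inter.mpr ⟨mem_pencil.mp hi, mem_pencil.mp hj⟩)
  have hcover : (pencil L x).biUnion (fun i => (L i).erase x) = (univ.biUnion L).erase x := by
    refine eq_of_subset_of_card_le (fun z hz => ?_) ?_
    · obtain ⟨i, -, hzi⟩ := mem_biUnion.mp hz
      exact erase_subset_erase x (subset_biUnion_of_mem L (mem_univ i)) hzi
    · rw [card_biUnion hdisj, card_erase_of_mem hx, card_biUnion_eq_card hk hL hpencil hmeet hι,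
        sum_congr rfl fun i hi => by rw [card_erase_of_mem (mem_pencil.mp hi), hL],
        sum_const, card_pencil_eq hL hpencil hmeet hι hxi₀, hι, smul_eq_mul]
      simp
  obtain ⟨i, hi, hyi⟩ := mem_biUnion.mp (hcover ▸ mem_erase.mpr ⟨hxy.symm, hy⟩)
  exact ⟨i, mem_pencil.mp hi, mem_of_mem_erase hyi⟩

end LineFamily

section LatinRectangle

variable {α β : Type*} [Fintype α] {R : α × β → ℕ}

def column (R : α × β → ℕ) (c : β) : Finset ℕ :=
  univ.image fun i => R (i, c)

theorem image_eq_biUnion_column [Fintype β] (R : α × β → ℕ) :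
    univ.image R = univ.biUnion (column R) := by
  ext s
  simp only [mem_image, mem_univ, true_and, Prod.exists, mem_biUnion, column]
  exact exists_comm

theorem IsLatin.card_column (hR : IsLatin R) (c : β) : #(column R c) = Fintype.card α := by
  rw [column, card_image_of_injective _ fun i i' h => hR.2 i i' c h, card_univ]

theorem IsLatin.card_pencil_column_le [Fintype β] (hR : IsLatin R) (s : ℕ) :
    #(pencil (column R) s) ≤ Fintype.card α := by
  classical
  have hpencil : pencil (column R) s = (univ.filter (R · = s)).image Prod.snd := by
    ext c
    simp [column]
  calc #(pencil (column R) s) ≤ #(univ.filter (R · = s)) := hpencil ▸ card_image_le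
    _ ≤ #(univ : Finset α) := card_le_card_of_injOn Prod.fst (fun _ _ => mem_univ _)
        fun p hp q hq hpq => by
          simp only [coe_filter, mem_univ, true_and, Set.mem_ofPred_eq] at hp hq
          exact Prod.ext hpq (hR.1 p.1 p.2 q.2 (by rw [hp, hpq, hq]))
    _ = Fintype.card α := card_univ

theorem IsLatin.column_inter_nonempty (hR : IsLatin R)
    (hnr : ¬ HasRainbow R (Fintype.card α) 2) :
    Pairwise fun c c' => (column R c ∩ column R c').Nonempty := by
  classical
  intro c c' hcc'
  by_contra hdisj
  rw [not_nonempty_iff_eq_empty, ← disjoint_iff_inter_eq_empty] at hdisj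
  refine hnr ⟨univ, {c, c'}, card_univ, card_pair hcc', ?_⟩
  rintro ⟨i, j⟩ hij ⟨i', j'⟩ hij' heq
  simp only [coe_product, coe_univ, coe_pair, Set.mem_prod, Set.mem_univ, true_and,
    Set.mem_insert_iff, Set.mem_singleton_iff] at hij hij'
  have hcross : ∀ i i', R (i, c) ≠ R (i', c') := fun i i' h =>
    disjoint_left.mp hdisj (mem_image_of_mem _ (mem_univ i))
      (h ▸ mem_image_of_mem _ (mem_univ i'))
  obtain rfl : j = j' := by
    rcases hij with rfl | rfl <;> rcases hij' with rfl | rfl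
    exacts [rfl, absurd heq (hcross i i'), absurd heq.symm (hcross i' i), rfl]
  rw [hR.2 i i' j heq]

end LatinRectangle

theorem stmt_5 (a : ℕ) (ha : 0 < a)
    (R : Fin a × Fin (a ^ 2 - a + 1) → ℕ) (hR : IsLatin R)
    (hnr : ¬ HasRainbow R a 2) :
    (Finset.univ.image R).card = a ^ 2 - a + 1 ∧
    (∀ c, (Finset.univ.image fun i => R (i, c)).card = a) ∧
    (∀ c c' : Fin (a ^ 2 - a + 1), c ≠ c' →
      ((Finset.univ.image fun i => R (i, c)) ∩
        (Finset.univ.image fun i => R (i, c'))).card = 1) ∧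
    (∀ s s' : ℕ, s ∈ Finset.univ.image R → s' ∈ Finset.univ.image R → s ≠ s' →
      ∃ c, s ∈ Finset.univ.image (fun i => R (i, c)) ∧
        s' ∈ Finset.univ.image (fun i => R (i, c))) := by
  have hL : ∀ c, #(column R c) = a := fun c => (hR.card_column c).trans (Fintype.card_fin a)
  have hpencil : ∀ s, #(pencil (column R) s) ≤ a := fun s =>
    (hR.card_pencil_column_le s).trans_eq (Fintype.card_fin a)
  have hmeet := hR.column_inter_nonempty (by rwa [Fintype.card_fin])
  have hι : Fintype.card (Fin (a ^ 2 - a + 1)) = a * (a - 1) + 1 := by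
    rw [Fintype.card_fin, sq, Nat.mul_sub_one]
  rw [image_eq_biUnion_column]
  exact ⟨(card_biUnion_eq_card ha hL hpencil hmeet hι).trans (Fintype.card_fin _), hL,
    fun _ _ => card_inter_eq_one hL hpencil hmeet hι,
    fun _ _ => exists_mem_mem_of_ne ha hL hpencil hmeet hι⟩
end

section
/- Let A be an m × n latin rectangle with positive integer entries bounded by t, and let B be an r × s latin rectangle with nonnegative integer entries. Define A' to be the rm × sn array whose (u,v) block (for u ∈ Fin r, v ∈ Fin s) is A + t·B(u,v)·J, where J is the all-ones m × n matrix. Then A' is an rm × sn latin rectangle. -/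
/-! An entry `a + t * b` of the inflated array determines both `a` and `b`, since `a - 1` and `b`
are the remainder and quotient of `a - 1 + t * b` modulo `t`. Hence two equal entries in a row
(or column) of the inflated array come from equal entries in a row (column) of `A` and of `B`. -/

theorem Nat.add_mul_inj_of_mem_Icc {t a a' b b' : ℕ} (ha : a ∈ Set.Icc 1 t)
    (ha' : a' ∈ Set.Icc 1 t) (h : a + t * b = a' + t * b') : a = a' ∧ b = b' := by
  have hquot : ∀ {c d}, c ∈ Set.Icc 1 t → (c - 1 + t * d) / t = d := fun ⟨hc₁, hc₂⟩ => by
    rw [Nat.add_mul_div_left _ _ (by omega), Nat.div_eq_of_lt (by omega), zero_add]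
  have hb : b = b' := by
    rw [← hquot (d := b) ha, ← hquot (d := b') ha']
    have := ha.1
    have := ha'.1
    congr 1
    omega
  subst hb
  exact ⟨by omega, rfl⟩

theorem IsLatin.inflate {α β γ δ : Type*} {A : α × β → ℕ} {B : γ × δ → ℕ} {t : ℕ}
    (hA : IsLatin A) (hAt : ∀ p, A p ∈ Set.Icc 1 t) (hB : IsLatin B) :
    IsLatin (fun p : (γ × α) × (δ × β) => A (p.1.2, p.2.2) + t * B (p.1.1, p.2.1)) := by
  constructor
  · rintro ⟨u, i⟩ ⟨v, j⟩ ⟨v', j'⟩ h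
    obtain ⟨hAeq, hBeq⟩ := Nat.add_mul_inj_of_mem_Icc (hAt _) (hAt _) h
    exact Prod.ext (hB.1 u v v' hBeq) (hA.1 i j j' hAeq)
  · rintro ⟨u, i⟩ ⟨u', i'⟩ ⟨v, j⟩ h
    obtain ⟨hAeq, hBeq⟩ := Nat.add_mul_inj_of_mem_Icc (hAt _) (hAt _) h
    exact Prod.ext (hB.2 u u' v hBeq) (hA.2 i i' j hAeq)

theorem stmt_9 (m n r s t : ℕ)
    (A : Fin m × Fin n → ℕ) (hA : IsLatin A)
    (hAt : ∀ p, 1 ≤ A p ∧ A p ≤ t)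
    (B : Fin r × Fin s → ℕ) (hB : IsLatin B) :
    IsLatin (fun p : (Fin r × Fin m) × (Fin s × Fin n) =>
      A (p.1.2, p.2.2) + t * B (p.1.1, p.2.1)) :=
  hA.inflate hAt hB
end

section
/- Let A be an m × n latin rectangle with positive entries bounded by t and with no rainbow a × b subrectangle, and let B be an r × s latin rectangle with nonnegative integer entries. Then the rm × sn latin rectangle A' defined by A'((u,i),(v,j)) = A(i,j) + t·B(u,v) contains no rainbow (r(a-1)+1) × (s(b-1)+1) subrectangle. -/
/-!
Pigeonhole on the row blocks and on the column blocks: `r * (a - 1) + 1` rows of `A'` contain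
`a` rows from a single block `u`, and `s * (b - 1) + 1` columns contain `b` columns from a single
block `v`. On block `(u, v)` the array `A'` is `A` shifted by the constant `t * B (u, v)`, so a
rainbow subrectangle there would be a rainbow `a × b` subrectangle of `A`.
-/

open Finset

lemma Finset.exists_card_eq_of_mul_lt_card {ι γ : Type*} [Fintype ι] (S : Finset (ι × γ)) {c : ℕ} (hS : Fintype.card ι * (c - 1) < #S) :
    ∃ (u : ι) (T : Finset γ), #T = c ∧ ∀ x ∈ T, (u, x) ∈ S := by
  classical
  obtain ⟨u, -, hu⟩ := exists_lt_card_fiber_of_mul_lt_card_of_maps_to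
    (t := univ) (f := Prod.fst) (fun p _ => mem_univ p.1) hS
  have hfiber : #((S.filter (·.1 = u)).image Prod.snd) = #(S.filter (·.1 = u)) :=
    card_image_of_injOn fun p hp q hq h =>
      Prod.ext ((mem_filter.1 hp).2.trans (mem_filter.1 hq).2.symm) h
  obtain ⟨T, hTsub, hTcard⟩ := exists_subset_card_eq (s := (S.filter (·.1 = u)).image Prod.snd)
    (n := c) (by omega)
  refine ⟨u, T, hTcard, fun x hx => ?_⟩
  obtain ⟨p, hp, rfl⟩ := mem_image.1 (hTsub hx)
  obtain ⟨hpS, rfl⟩ := mem_filter.1 hp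
  exact hpS

lemma HasRainbow.of_comp {α β : Type*} {R : α × β → ℕ} (f : ℕ → ℕ) {a b : ℕ}
    (h : HasRainbow (f ∘ R) a b) : HasRainbow R a b :=
  let ⟨rows, cols, hrows, hcols, hinj⟩ := h
  ⟨rows, cols, hrows, hcols, hinj.of_comp⟩

lemma HasRainbow.exists_block {κ α μ β : Type*} [Fintype κ] [Fintype μ]
    {R : (κ × α) × (μ × β) → ℕ} {a b : ℕ}
    (h : HasRainbow R (Fintype.card κ * (a - 1) + 1) (Fintype.card μ * (b - 1) + 1)) :
    ∃ u v, HasRainbow (fun p : α × β => R ((u, p.1), (v, p.2))) a b := by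
  classical
  obtain ⟨rows, cols, hrows, hcols, hinj⟩ := h
  obtain ⟨u, T, hT, hTrows⟩ := rows.exists_card_eq_of_mul_lt_card (c := a) (by omega)
  obtain ⟨v, T', hT', hT'cols⟩ := cols.exists_card_eq_of_mul_lt_card (c := b) (by omega)
  refine ⟨u, v, T, T', hT, hT', hinj.comp ?_ ?_⟩
  · rintro ⟨i, j⟩ - ⟨i', j'⟩ - h
    simp only [Prod.mk.injEq] at h
    rw [h.1.2, h.2.2]
  · rintro ⟨i, j⟩ hij
    simp only [coe_product, Set.mem_prod, mem_coe] at hij ⊢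
    exact ⟨hTrows i hij.1, hT'cols j hij.2⟩

theorem stmt_10_general (m n r s t a b : ℕ)
    (A : Fin m × Fin n → ℕ)
    (hnr : ¬ HasRainbow A a b)
    (B : Fin r × Fin s → ℕ) :
    ¬ HasRainbow (fun p : (Fin r × Fin m) × (Fin s × Fin n) =>
        A (p.1.2, p.2.2) + t * B (p.1.1, p.2.1))
      (r * (a - 1) + 1) (s * (b - 1) + 1) := by
  intro h
  obtain ⟨u, v, hblock⟩ := HasRainbow.exists_block (κ := Fin r) (μ := Fin s)
    (by simpa only [Fintype.card_fin] using h)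
  exact hnr (hblock.of_comp (· + t * B (u, v)))

theorem stmt_10 (m n r s t a b : ℕ)
    (A : Fin m × Fin n → ℕ) (hA : IsLatin A)
    (hAt : ∀ p, 1 ≤ A p ∧ A p ≤ t)
    (hnr : ¬ HasRainbow A a b)
    (B : Fin r × Fin s → ℕ) (hB : IsLatin B) :
    ¬ HasRainbow (fun p : (Fin r × Fin m) × (Fin s × Fin n) =>
        A (p.1.2, p.2.2) + t * B (p.1.1, p.2.1))
      (r * (a - 1) + 1) (s * (b - 1) + 1) :=
  stmt_10_general m n r s t a b A hnr B
end

section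
/- Every 3 × 6 latin rectangle contains a rainbow 2 × 3 subrectangle or a rainbow 3 × 2 subrectangle. -/
/-!
For two rows, join two columns when the `2 × 2` subrectangle they span repeats a symbol. Latinity
bounds the degrees of this clash graph by two, and without a rainbow `2 × 3` it has no independent
triple, so on six columns it is two disjoint triangles. Without a rainbow `3 × 2`, every pair of
columns is an edge of one of the three clash graphs; but of three partitions of six columns into
triples, some pair of columns is split by all three.
-/

open Finset

namespace SimpleGraph

variable {V : Type*} {G : SimpleGraph V}

lemma IndepSetFree.adj_or_adj_or_adj [DecidableEq V] (h : G.IndepSetFree 3) {a b c : V}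
    (hab : a ≠ b) (hac : a ≠ c) (hbc : b ≠ c) : G.Adj a b ∨ G.Adj a c ∨ G.Adj b c := by
  by_contra! hnot
  refine (G.cliqueFree_compl.2 h) {a, b, c} (is3Clique_triple_iff.2 ?_)
  simp only [compl_adj]
  exact ⟨⟨hab, hnot.1⟩, ⟨hac, hnot.2.1⟩, ⟨hbc, hnot.2.2⟩⟩

variable [Fintype V] [DecidableEq V] [DecidableRel G.Adj]

lemma IndepSetFree.adj_of_notMem_closedNbhd (h : G.IndepSetFree 3) {v a b : V}
    (ha : a ∉ insert v (G.neighborFinset v)) (hb : b ∉ insert v (G.neighborFinset v))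
    (hab : a ≠ b) : G.Adj a b := by
  simp only [mem_insert, mem_neighborFinset, not_or] at ha hb
  rcases h.adj_or_adj_or_adj (Ne.symm ha.1) (Ne.symm hb.1) hab with hva | hvb | hab
  exacts [absurd hva ha.2, absurd hvb hb.2, hab]

/-- The vertices outside the closed neighbourhood of `v` are pairwise adjacent, hence form a clique
of size `5 - deg v ≥ 3`; degree at most two makes it a triangle with no edges leaving it. -/
theorem IndepSetFree.card_closedNbhd_eq_three_and_mem_of_adj (hV : Fintype.card V = 6)
    (hdeg : ∀ v, G.degree v ≤ 2) (h : G.IndepSetFree 3) (v : V) :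
    #(insert v (G.neighborFinset v)) = 3 ∧
      ∀ a b, G.Adj a b → a ∈ insert v (G.neighborFinset v) → b ∈ insert v (G.neighborFinset v) := by
  set N := insert v (G.neighborFinset v)
  have hN : #N = G.degree v + 1 := by
    rw [card_insert_of_notMem (G.notMem_neighborFinset_self v), card_neighborFinset_eq_degree]
  have hcompl : #Nᶜ = 6 - #N := by rw [card_compl, hV]
  have hclique_sub : ∀ a ∈ Nᶜ, Nᶜ.erase a ⊆ G.neighborFinset a := fun a ha b hb => by
    rw [mem_erase] at hb
    rw [mem_neighborFinset]
    exact h.adj_of_notMem_closedNbhd (mem_compl.1 ha) (mem_compl.1 hb.2) (Ne.symm hb.1)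
  obtain ⟨a, ha⟩ : Nᶜ.Nonempty := by
    rw [← card_pos]
    have := hdeg v
    omega
  have hWa := card_le_card (hclique_sub a ha)
  rw [card_erase_of_mem ha, card_neighborFinset_eq_degree] at hWa
  have hW3 : #Nᶜ = 3 := by
    have := hdeg a
    have := hdeg v
    omega
  refine ⟨by omega, fun a b hab haN => ?_⟩
  by_contra hbN
  have hnbr : Nᶜ.erase b = G.neighborFinset b := by
    refine eq_of_subset_of_card_le (hclique_sub b (mem_compl.2 hbN)) ?_
    rw [card_erase_of_mem (mem_compl.2 hbN), card_neighborFinset_eq_degree]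
    have := hdeg b
    omega
  have : a ∈ Nᶜ.erase b := hnbr ▸ (G.mem_neighborFinset b a).2 hab.symm
  exact mem_compl.1 (mem_of_mem_erase this) haN

end SimpleGraph

/-- `Sᵢ` stands for the partition `{Sᵢ, Sᵢᶜ}`; requiring `0 ∈ Sᵢ` picks one name for each. -/
lemma exists_pair_separated_by_triples {S₁ S₂ S₃ : Finset (Fin 6)}
    (h₁ : 0 ∈ S₁ ∧ #S₁ = 3) (h₂ : 0 ∈ S₂ ∧ #S₂ = 3) (h₃ : 0 ∈ S₃ ∧ #S₃ = 3) :
    ∃ j k : Fin 6, (j ∈ S₁ ↔ k ∉ S₁) ∧ (j ∈ S₂ ↔ k ∉ S₂) ∧ (j ∈ S₃ ↔ k ∉ S₃) := by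
  have key : ∀ S₁ ∈ ((univ : Finset (Fin 6)).powersetCard 3).filter (0 ∈ ·),
      ∀ S₂ ∈ ((univ : Finset (Fin 6)).powersetCard 3).filter (0 ∈ ·),
      ∀ S₃ ∈ ((univ : Finset (Fin 6)).powersetCard 3).filter (0 ∈ ·),
      ∃ j k : Fin 6, (j ∈ S₁ ↔ k ∉ S₁) ∧ (j ∈ S₂ ↔ k ∉ S₂) ∧ (j ∈ S₃ ↔ k ∉ S₃) := by
    set_option maxRecDepth 10000 in decide
  exact key S₁ (by simp [h₁]) S₂ (by simp [h₂]) S₃ (by simp [h₃])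

section LatinRectangle

variable {α β : Type*} {R : α × β → ℕ}

/-- For latin `R` and `r ≠ r'`, columns are adjacent iff the `2 × 2` subrectangle on rows `r, r'`
and these columns is not rainbow. -/
def clashGraph (R : α × β → ℕ) (r r' : α) : SimpleGraph β :=
  SimpleGraph.fromRel fun j k => R (r, j) = R (r', k)

lemma clashGraph_comm (R : α × β → ℕ) (r r' : α) : clashGraph R r r' = clashGraph R r' r := by
  ext j k
  simp only [clashGraph, SimpleGraph.fromRel_adj, eq_comm (a := R (r, _)), or_comm]

lemma IsLatin.injOn_prod (hR : IsLatin R) {rows : Finset α} {cols : Finset β}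
    (h : ∀ a ∈ rows, ∀ a' ∈ rows, ∀ b ∈ cols, ∀ b' ∈ cols, a ≠ a' → b ≠ b' →
      R (a, b) ≠ R (a', b')) :
    Set.InjOn R ↑(rows ×ˢ cols) := by
  rintro ⟨a, b⟩ hab ⟨a', b'⟩ hab' heq
  simp only [coe_product, Set.mem_prod, mem_coe] at hab hab'
  by_cases ha : a = a'
  · subst ha
    rw [hR.1 a b b' heq]
  · by_cases hb : b = b'
    · subst hb
      exact absurd (hR.2 a a' b heq) ha
    · exact absurd heq (h a hab.1 a' hab'.1 b hab.2 b' hab'.2 ha hb)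

lemma IsLatin.degree_clashGraph_le_two [Fintype β] (hR : IsLatin R) (r r' : α)
    [DecidableRel (clashGraph R r r').Adj] (j : β) : (clashGraph R r r').degree j ≤ 2 := by
  classical
  have hsub : (clashGraph R r r').neighborFinset j ⊆
      univ.filter (fun k => R (r', k) = R (r, j)) ∪ univ.filter (fun k => R (r, k) = R (r', j)) :=
    fun k hk => by
      rw [SimpleGraph.mem_neighborFinset, clashGraph, SimpleGraph.fromRel_adj] at hk
      rcases hk.2 with h | h
      · exact mem_union_left _ (mem_filter.2 ⟨mem_univ k, h.symm⟩)
      · exact mem_union_right _ (mem_filter.2 ⟨mem_univ k, h⟩)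
  have hrow : ∀ (i : α) (c : ℕ), #(univ.filter (fun k => R (i, k) = c)) ≤ 1 := fun i c =>
    card_le_one.2 fun k hk l hl => hR.1 i k l ((mem_filter.1 hk).2.trans (mem_filter.1 hl).2.symm)
  rw [← SimpleGraph.card_neighborFinset_eq_degree]
  calc _ ≤ _ := card_le_card hsub
    _ ≤ 1 + 1 := (card_union_le _ _).trans (add_le_add (hrow _ _) (hrow _ _))

lemma IsLatin.hasRainbow_two_three_of_isNIndepSet (hR : IsLatin R) {r r' : α} (hrr : r ≠ r')
    {s : Finset β} (hs : (clashGraph R r r').IsNIndepSet 3 s) : HasRainbow R 2 3 := by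
  classical
  refine ⟨{r, r'}, s, card_pair hrr, hs.card_eq, hR.injOn_prod ?_⟩
  intro a ha a' ha' b hb b' hb' haa hbb
  have hnadj := hs.isIndepSet (mem_coe.2 hb) (mem_coe.2 hb') hbb
  simp only [clashGraph, SimpleGraph.fromRel_adj, not_and, not_or] at hnadj
  simp only [mem_insert, mem_singleton] at ha ha'
  rcases ha with rfl | rfl <;> rcases ha' with rfl | rfl
  exacts [absurd rfl haa, (hnadj hbb).1, fun h => (hnadj hbb).2 h.symm, absurd rfl haa]

lemma IsLatin.hasRainbow_three_two_of_forall_not_adj [Fintype α] (hR : IsLatin R)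
    (hα : Fintype.card α = 3) {j k : β} (hjk : j ≠ k)
    (h : ∀ r r', r ≠ r' → ¬ (clashGraph R r r').Adj j k) : HasRainbow R 3 2 := by
  classical
  refine ⟨univ, {j, k}, by rw [card_univ, hα], card_pair hjk, hR.injOn_prod ?_⟩
  intro a _ a' _ b hb b' hb' haa hbb
  have hnadj := h a a' haa
  simp only [clashGraph, SimpleGraph.fromRel_adj, not_and, not_or] at hnadj
  simp only [mem_insert, mem_singleton] at hb hb'
  rcases hb with rfl | rfl <;> rcases hb' with rfl | rfl
  exacts [absurd rfl hbb, (hnadj hbb).1, (hnadj hjk).2, absurd rfl hbb]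

end LatinRectangle

theorem stmt_11 (R : Fin 3 × Fin 6 → ℕ) (hR : IsLatin R) :
    HasRainbow R 2 3 ∨ HasRainbow R 3 2 := by
  classical
  by_contra! h
  obtain ⟨h23, h32⟩ := h
  set S : Fin 3 → Fin 3 → Finset (Fin 6) :=
    fun r r' => insert 0 ((clashGraph R r r').neighborFinset 0)
  have hS : ∀ r r', r ≠ r' → #(S r r') = 3 ∧
      ∀ a b, (clashGraph R r r').Adj a b → a ∈ S r r' → b ∈ S r r' := fun r r' hrr =>
    SimpleGraph.IndepSetFree.card_closedNbhd_eq_three_and_mem_of_adj (by simp)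
      (hR.degree_clashGraph_le_two r r')
      (fun s hs => h23 (hR.hasRainbow_two_three_of_isNIndepSet hrr hs)) 0
  obtain ⟨j, k, h01, h02, h12⟩ := exists_pair_separated_by_triples
    ⟨mem_insert_self _ _, (hS 0 1 (by decide)).1⟩ ⟨mem_insert_self _ _, (hS 0 2 (by decide)).1⟩
    ⟨mem_insert_self _ _, (hS 1 2 (by decide)).1⟩
  have hsep : ∀ r r', r ≠ r' → (j ∈ S r r' ↔ k ∉ S r r') := by
    intro r r' hrr
    fin_cases r <;> fin_cases r' <;> simp_all [S, clashGraph_comm R 1 0, clashGraph_comm R 2 0,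
      clashGraph_comm R 2 1]
  have hjk : j ≠ k := by
    rintro rfl
    tauto
  obtain ⟨r, r', hrr, hadj⟩ : ∃ r r', r ≠ r' ∧ (clashGraph R r r').Adj j k := by
    by_contra! hnadj
    exact h32 (hR.hasRainbow_three_two_of_forall_not_adj (by simp) hjk hnadj)
  have hclosed : j ∈ S r r' ↔ k ∈ S r r' :=
    ⟨(hS r r' hrr).2 j k hadj, (hS r r' hrr).2 k j hadj.symm⟩
  have := hsep r r' hrr
  tauto
end

section
/- For every integer b ≥ 2, the vertex anti-Ramsey number AR_V(K_{2,b}) equals 3b. That is: (i) every 2 × (3b - 2) latin rectangle contains a rainbow 2 × b subrectangle, and (ii) for all positive integers m ≤ n with m + n < 3b, there exists an m × n latin rectangle containing neither a rainbow 2 × b nor a rainbow b × 2 subrectangle. -/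
open Finset Function

variable {α α' β β' β₁ β₂ : Type*}

/-- For a latin `R`, this says exactly that rows `i ≠ i'` and columns `Y` form a rainbow
subrectangle. -/
def IsTwoRowRainbow (R : α × β → ℕ) (i i' : α) (Y : Finset β) : Prop :=
  ∀ j ∈ Y, ∀ j' ∈ Y, R (i, j) ≠ R (i', j')

def TwoRowRainbowWidthLE (R : α × β → ℕ) (w : ℕ) : Prop :=
  ∀ i i', i ≠ i' → ∀ Y : Finset β, IsTwoRowRainbow R i i' Y → #Y ≤ w

theorem IsLatin.hasRainbow_two [DecidableEq α] {R : α × β → ℕ} (hR : IsLatin R) {i i' : α}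
    (hii' : i ≠ i') {Y : Finset β} (hY : IsTwoRowRainbow R i i' Y) : HasRainbow R 2 #Y := by
  refine ⟨{i, i'}, Y, card_pair hii', rfl, ?_⟩
  rintro ⟨a, j⟩ ha ⟨a', j'⟩ ha' h
  simp only [coe_product, coe_pair, Set.mem_prod, Set.mem_insert_iff, Set.mem_singleton_iff,
    mem_coe] at ha ha'
  obtain ⟨rfl | rfl, hj⟩ := ha <;> obtain ⟨rfl | rfl, hj'⟩ := ha'
  · rw [hR.1 _ _ _ h]
  · exact absurd h (hY j hj j' hj')
  · exact absurd h.symm (hY j' hj' j hj)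
  · rw [hR.1 _ _ _ h]

theorem TwoRowRainbowWidthLE.not_hasRainbow {R : α × β → ℕ} {w b : ℕ}
    (hR : TwoRowRainbowWidthLE R w) (hwb : w < b) : ¬ HasRainbow R 2 b := by
  classical
  rintro ⟨rows, cols, hrows, rfl, hinj⟩
  obtain ⟨i, i', hii', hrows⟩ := card_eq_two.mp hrows
  refine (hR i i' hii' cols fun j hj j' hj' h => hii' ?_).not_gt hwb
  exact congrArg Prod.fst (hinj (by simp [hrows, hj]) (by simp [hrows, hj']) h)

theorem not_hasRainbow_of_card_lt [Fintype α] {R : α × β → ℕ} {a b : ℕ}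
    (h : Fintype.card α < a) : ¬ HasRainbow R a b := by
  rintro ⟨rows, -, rfl, -, -⟩
  exact h.not_ge (card_le_univ rows)

theorem not_hasRainbow_of_lt {R : α × β → ℕ} {a b N : ℕ} (hR : ∀ p, R p < N)
    (hN : N < a * b) : ¬ HasRainbow R a b := by
  rintro ⟨rows, cols, rfl, rfl, hinj⟩
  have := card_le_card_of_injOn R (t := range N) (fun p _ => mem_range.2 (hR p)) hinj
  rw [card_product, card_range] at this
  omega

theorem exists_subset_card_eq_forall_apply_ne [DecidableEq β] {γ : Type*} {f g : β → γ}
    (hf : Injective f) (hg : Injective g) (hfg : ∀ j, f j ≠ g j) :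
    ∀ (k : ℕ) (S : Finset β), 3 * k ≤ #S + 2 →
      ∃ T ⊆ S, #T = k ∧ ∀ j ∈ T, ∀ j' ∈ T, f j ≠ g j'
  | 0, S, _ => ⟨∅, empty_subset S, rfl, by simp⟩
  | k + 1, S, hS => by
    classical
    obtain ⟨v, hv⟩ : S.Nonempty := card_pos.mp (by omega)
    set S' := {j ∈ S.erase v | f v ≠ g j ∧ f j ≠ g v} with hS'
    have hcover : S.erase v ⊆ S' ∪ ({j ∈ S | g j = f v} ∪ {j ∈ S | f j = g v}) := by
      intro j hj
      have hjS := mem_of_mem_erase hj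
      simp only [hS', mem_union, mem_filter]
      tauto
    have hfv : #{j ∈ S | g j = f v} ≤ 1 := card_le_one.2 fun a ha c hc =>
      hg ((mem_filter.1 ha).2.trans (mem_filter.1 hc).2.symm)
    have hgv : #{j ∈ S | f j = g v} ≤ 1 := card_le_one.2 fun a ha c hc =>
      hf ((mem_filter.1 ha).2.trans (mem_filter.1 hc).2.symm)
    have hcard : #S ≤ #S' + 3 := by
      have := card_le_card hcover
      have := card_union_le S' ({j ∈ S | g j = f v} ∪ {j ∈ S | f j = g v})
      have := card_union_le {j ∈ S | g j = f v} {j ∈ S | f j = g v}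
      have := card_erase_add_one hv
      omega
    obtain ⟨T, hTS', rfl, hT⟩ :=
      exists_subset_card_eq_forall_apply_ne hf hg hfg k S' (by omega)
    have hT' : ∀ j ∈ T, f v ≠ g j ∧ f j ≠ g v := fun j hj => (mem_filter.1 (hTS' hj)).2
    have hvT : v ∉ T := fun h => by simpa [hS'] using hTS' h
    refine ⟨insert v T, insert_subset hv fun j hj => ?_, card_insert_of_notMem hvT, ?_⟩
    · exact mem_of_mem_erase (mem_filter.1 (hTS' hj)).1
    · simp only [mem_insert, forall_eq_or_imp]
      exact ⟨⟨hfg v, fun j hj => (hT' j hj).1⟩, fun j hj => ⟨(hT' j hj).2, hT j hj⟩⟩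

theorem IsLatin.hasRainbow_two_of_three_mul_le [Fintype β] {R : Fin 2 × β → ℕ} (hR : IsLatin R)
    {b : ℕ} (hb : 3 * b ≤ Fintype.card β + 2) : HasRainbow R 2 b := by
  classical
  obtain ⟨T, -, hTb, hT⟩ := exists_subset_card_eq_forall_apply_ne
    (f := fun j => R (0, j)) (g := fun j => R (1, j)) (fun j j' h => hR.1 0 j j' h)
    (fun j j' h => hR.1 1 j j' h) (fun j h => absurd (hR.2 0 1 j h) (by decide)) b univ
    (by rwa [card_univ])
  have := hR.hasRainbow_two (by decide) hT
  rwa [hTb] at this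

theorem TwoRowRainbowWidthLE.mono {R : α × β → ℕ} {w w' : ℕ} (hR : TwoRowRainbowWidthLE R w)
    (h : w ≤ w') : TwoRowRainbowWidthLE R w' :=
  fun i i' hii' Y hY => (hR i i' hii' Y hY).trans h

theorem twoRowRainbowWidthLE_card [Fintype β] (R : α × β → ℕ) :
    TwoRowRainbowWidthLE R (Fintype.card β) :=
  fun _ _ _ Y _ => card_le_univ Y

theorem IsLatin.comp_prodMap {R : α × β → ℕ} (hR : IsLatin R) {f : α' → α} {g : β' → β}
    (hf : Injective f) (hg : Injective g) : IsLatin (R ∘ Prod.map f g) :=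
  ⟨fun _ _ _ h => hg (hR.1 _ _ _ h), fun _ _ _ h => hf (hR.2 _ _ _ h)⟩

theorem TwoRowRainbowWidthLE.comp_prodMap {R : α × β → ℕ} {w : ℕ}
    (hR : TwoRowRainbowWidthLE R w) {f : α' → α} {g : β' → β} (hf : Injective f)
    (hg : Injective g) : TwoRowRainbowWidthLE (R ∘ Prod.map f g) w := by
  intro i i' hii' Y hY
  rw [← card_map ⟨g, hg⟩]
  refine hR _ _ (hf.ne hii') _ ?_
  simp only [IsTwoRowRainbow, mem_map, Embedding.coeFn_mk, forall_exists_index, and_imp,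
    forall_apply_eq_imp_iff₂]
  exact hY

def sumCols (R₁ : α × β₁ → ℕ) (R₂ : α × β₂ → ℕ) : α × (β₁ ⊕ β₂) → ℕ :=
  fun p => p.2.elim (fun j => 2 * R₁ (p.1, j)) (fun j => 2 * R₂ (p.1, j) + 1)

section sumCols

variable {R₁ : α × β₁ → ℕ} {R₂ : α × β₂ → ℕ}

theorem IsLatin.sumCols (h₁ : IsLatin R₁) (h₂ : IsLatin R₂) : IsLatin (sumCols R₁ R₂) := by
  refine ⟨fun i j j' h => ?_, fun i i' j h => ?_⟩
  · rcases j with j | j <;> rcases j' with j' | j' <;>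
      simp only [_root_.sumCols, Sum.elim_inl, Sum.elim_inr] at h
    · rw [h₁.1 i j j' (by omega)]
    · omega
    · omega
    · rw [h₂.1 i j j' (by omega)]
  · rcases j with j | j <;> simp only [_root_.sumCols, Sum.elim_inl, Sum.elim_inr] at h
    · exact h₁.2 i i' j (by omega)
    · exact h₂.2 i i' j (by omega)

theorem TwoRowRainbowWidthLE.sumCols {w₁ w₂ : ℕ} (h₁ : TwoRowRainbowWidthLE R₁ w₁)
    (h₂ : TwoRowRainbowWidthLE R₂ w₂) : TwoRowRainbowWidthLE (sumCols R₁ R₂) (w₁ + w₂) := by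
  intro i i' hii' Y hY
  rw [← card_toLeft_add_card_toRight]
  refine add_le_add (h₁ i i' hii' _ fun j hj j' hj' h => ?_)
    (h₂ i i' hii' _ fun j hj j' hj' h => ?_)
  · exact hY _ (mem_toLeft.1 hj) _ (mem_toLeft.1 hj') (by simp [_root_.sumCols, h])
  · exact hY _ (mem_toRight.1 hj) _ (mem_toRight.1 hj') (by simp [_root_.sumCols, h])

end sumCols

def copiesCols (Q : ℕ) (R : α × β → ℕ) : α × (Fin Q × β) → ℕ :=
  fun p => Nat.pair p.2.1 (R (p.1, p.2.2))

section copiesCols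

variable {R : α × β → ℕ} {Q : ℕ}

theorem IsLatin.copiesCols (hR : IsLatin R) : IsLatin (copiesCols Q R) := by
  refine ⟨fun i j j' h => ?_, fun i i' j h => ?_⟩
  · obtain ⟨ht, hx⟩ := Nat.pair_eq_pair.1 h
    exact Prod.ext (Fin.ext ht) (hR.1 _ _ _ hx)
  · exact hR.2 _ _ _ (Nat.pair_eq_pair.1 h).2

theorem TwoRowRainbowWidthLE.copiesCols {w : ℕ} (hR : TwoRowRainbowWidthLE R w) :
    TwoRowRainbowWidthLE (copiesCols Q R) (Q * w) := by
  classical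
  intro i i' hii' Y hY
  have := card_le_mul_card_image_of_maps_to (s := Y) (f := Prod.fst) (t := univ)
    (fun p _ => mem_univ p.1) w fun t _ => ?_
  · simpa [mul_comm] using this
  rw [← card_image_of_injOn (f := Prod.snd) fun p hp p' hp' h =>
    Prod.ext ((mem_filter.1 hp).2.trans (mem_filter.1 hp').2.symm) h]
  refine hR i i' hii' _ ?_
  simp only [IsTwoRowRainbow, mem_image, mem_filter, forall_exists_index, and_imp]
  rintro _ ⟨t₁, j⟩ hj rfl rfl _ ⟨t₂, j'⟩ hj' rfl rfl h
  exact hY _ hj _ hj' (by simp [_root_.copiesCols, h])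

end copiesCols

noncomputable def cayleyTable (G : Type*) [Add G] [Fintype G] [DecidableEq G] : G × G → ℕ :=
  fun p => Fintype.equivFin G (p.1 + p.2)

section cayleyTable

variable (G : Type*) [AddGroup G] [Fintype G] [DecidableEq G]

theorem cayleyTable_lt (p : G × G) : cayleyTable G p < Fintype.card G :=
  (Fintype.equivFin G _).isLt

theorem isLatin_cayleyTable : IsLatin (cayleyTable G) :=
  ⟨fun _ _ _ h => add_left_cancel ((Fintype.equivFin G).injective (Fin.ext h)),
    fun _ _ _ h => add_right_cancel ((Fintype.equivFin G).injective (Fin.ext h))⟩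

variable {G}

theorem IsTwoRowRainbow.disjoint_image_add {i i' : G} {Y : Finset G}
    (hY : IsTwoRowRainbow (cayleyTable G) i i' Y) : Disjoint Y (Y.image (-i + i' + ·)) := by
  refine disjoint_left.2 fun x hx hx' => ?_
  obtain ⟨x', hx'Y, rfl⟩ := mem_image.1 hx'
  exact hY _ hx _ hx'Y (by simp [cayleyTable, ← add_assoc])

theorem two_mul_card_le_of_disjoint_image_add {Y : Finset G} {d : G}
    (h : Disjoint Y (Y.image (d + ·))) : 2 * #Y ≤ Fintype.card G := by
  have := card_le_univ (Y ∪ Y.image (d + ·))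
  rw [card_union_of_disjoint h, card_image_of_injective _ (add_right_injective d)] at this
  omega

theorem three_mul_card_le_of_disjoint_image_add {Y : Finset G} {d : G} (hd : 3 • d = 0)
    (h : Disjoint Y (Y.image (d + ·))) : 3 * #Y ≤ Fintype.card G := by
  have hinj := add_right_injective d
  have h₁₂ : Disjoint (Y.image (d + ·)) ((Y.image (d + ·)).image (d + ·)) :=
    (disjoint_image hinj).2 h
  have h₀₂ : Disjoint Y ((Y.image (d + ·)).image (d + ·)) := by
    refine disjoint_left.2 fun x hx hx' => ?_
    simp only [mem_image, exists_exists_and_eq_and] at hx'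
    obtain ⟨y, hy, rfl⟩ := hx'
    refine disjoint_left.1 h hy (mem_image.2 ⟨d + (d + y), hx, ?_⟩)
    rw [← add_assoc, ← add_assoc, ← two_nsmul, ← succ_nsmul, hd, zero_add]
  have := card_le_univ (Y ∪ Y.image (d + ·) ∪ (Y.image (d + ·)).image (d + ·))
  rw [card_union_of_disjoint (disjoint_union_left.2 ⟨h₀₂, h₁₂⟩), card_union_of_disjoint h,
    card_image_of_injective _ hinj, card_image_of_injective _ hinj,
    card_image_of_injective _ hinj] at this
  omega

theorem twoRowRainbowWidthLE_cayleyTable_two :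
    TwoRowRainbowWidthLE (cayleyTable G) (Fintype.card G / 2) := by
  intro i i' _ Y hY
  have := two_mul_card_le_of_disjoint_image_add hY.disjoint_image_add
  omega

theorem twoRowRainbowWidthLE_cayleyTable_three (h3 : ∀ g : G, 3 • g = 0) :
    TwoRowRainbowWidthLE (cayleyTable G) (Fintype.card G / 3) := by
  intro i i' _ Y hY
  have := three_mul_card_le_of_disjoint_image_add (h3 _) hY.disjoint_image_add
  omega

end cayleyTable

theorem exists_isLatin_twoRowRainbowWidthLE_of_le_card (G : Type*) [AddGroup G] [Fintype G]
    [DecidableEq G] (h3 : ∀ g : G, 3 • g = 0) {m L : ℕ} (hmG : m ≤ Fintype.card G)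
    (hGm : Fintype.card G < 3 * m) (hLG : L ≤ Fintype.card G) :
    ∃ R : Fin m × Fin L → ℕ, IsLatin R ∧ TwoRowRainbowWidthLE R ((m + L) / 3) := by
  by_cases hGL : Fintype.card G ≤ m + L
  · obtain ⟨f⟩ := Embedding.nonempty_of_card_le (α := Fin m) (β := G) (by simpa)
    obtain ⟨g⟩ := Embedding.nonempty_of_card_le (α := Fin L) (β := G) (by simpa)
    exact ⟨_, (isLatin_cayleyTable G).comp_prodMap f.injective g.injective,
      ((twoRowRainbowWidthLE_cayleyTable_three h3).comp_prodMap f.injective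
        g.injective).mono (by omega)⟩
  · set M := max m L
    have : NeZero M := ⟨by omega⟩
    obtain ⟨f⟩ := Embedding.nonempty_of_card_le (α := Fin m) (β := ZMod M) (by simp; omega)
    obtain ⟨g⟩ := Embedding.nonempty_of_card_le (α := Fin L) (β := ZMod M) (by simp; omega)
    refine ⟨_, (isLatin_cayleyTable _).comp_prodMap f.injective g.injective, ?_⟩
    rcases le_or_gt (2 * L) m with hLm | hmL
    · exact (twoRowRainbowWidthLE_card _).mono (by simp; omega)
    · exact (twoRowRainbowWidthLE_cayleyTable_two.comp_prodMap f.injective g.injective).mono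
        (by simp; omega)

theorem exists_pow_three_between {m : ℕ} (hm : 0 < m) : ∃ s, m ≤ 3 ^ s ∧ 3 ^ s < 3 * m := by
  refine ⟨Nat.log 3 (3 * m - 1), ?_, ?_⟩
  · have := Nat.lt_pow_succ_log_self (b := 3) (by norm_num) (3 * m - 1)
    rw [pow_succ] at this
    omega
  · have := Nat.pow_log_le_self 3 (x := 3 * m - 1) (by omega)
    omega

theorem exists_isLatin_twoRowRainbowWidthLE {m : ℕ} (hm : 0 < m) (n : ℕ) :
    ∃ R : Fin m × Fin n → ℕ, IsLatin R ∧ TwoRowRainbowWidthLE R ((m + n) / 3) := by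
  obtain ⟨s, hmP, hPm⟩ := exists_pow_three_between hm
  set G := Fin s → ZMod 3
  have hG : Fintype.card G = 3 ^ s := by simp [G]
  have h3 : ∀ g : G, 3 • g = 0 := fun g => by
    ext i
    rw [Pi.smul_apply, nsmul_eq_mul, ZMod.natCast_self, zero_mul, Pi.zero_apply]
  set P := 3 ^ s
  set Q := n / P
  set L := n % P
  obtain ⟨f⟩ := Embedding.nonempty_of_card_le (α := Fin m) (β := G) (by simpa [hG])
  have hmain := (isLatin_cayleyTable G).comp_prodMap f.injective injective_id
  have hmainW := (twoRowRainbowWidthLE_cayleyTable_three h3).comp_prodMap f.injective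
    injective_id
  have hLP : L < P := Nat.mod_lt n (by positivity)
  obtain ⟨RL, hRL, hRLW⟩ := exists_isLatin_twoRowRainbowWidthLE_of_le_card G h3
    (hG ▸ hmP) (hG ▸ hPm) (hG ▸ hLP.le)
  have hcard : Fintype.card ((Fin Q × G) ⊕ Fin L) = n := by
    simp [hG, Q, L, P, Nat.div_add_mod']
  set e := (Fintype.equivFinOfCardEq hcard).symm
  refine ⟨_, (hmain.copiesCols.sumCols hRL).comp_prodMap injective_id e.injective,
    ((hmainW.copiesCols.sumCols hRLW).comp_prodMap injective_id e.injective).mono ?_⟩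
  have hn : Q * P + L = n := Nat.div_add_mod' n P
  have : 3 * (Q * (P / 3)) ≤ Q * P := by
    rw [mul_left_comm]
    exact Nat.mul_le_mul_left Q (Nat.mul_div_le P 3)
  rw [hG]
  omega

theorem exists_isLatin_lt {m n : ℕ} (hm : 0 < m) (hmn : m ≤ n) :
    ∃ R : Fin m × Fin n → ℕ, IsLatin R ∧ ∀ p, R p < n := by
  have : NeZero n := ⟨by omega⟩
  obtain ⟨f⟩ := Embedding.nonempty_of_card_le (α := Fin m) (β := ZMod n) (by simpa)
  obtain ⟨g⟩ := Embedding.nonempty_of_card_le (α := Fin n) (β := ZMod n) (by simp)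
  exact ⟨_, (isLatin_cayleyTable _).comp_prodMap f.injective g.injective,
    fun p => (cayleyTable_lt _ _).trans_eq (ZMod.card n)⟩

theorem stmt_14 (b : ℕ) (hb : 2 ≤ b) :
    (∀ R : Fin 2 × Fin (3 * b - 2) → ℕ, IsLatin R → HasRainbow R 2 b) ∧
    (∀ m n : ℕ, 0 < m → m ≤ n → m + n < 3 * b →
      ∃ R : Fin m × Fin n → ℕ, IsLatin R ∧
        ¬ HasRainbow R 2 b ∧ ¬ HasRainbow R b 2) := by
  refine ⟨fun R hR => hR.hasRainbow_two_of_three_mul_le (by simp; omega),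
    fun m n hm hmn hmnb => ?_⟩
  by_cases hn : n < 2 * b
  · obtain ⟨R, hR, hRn⟩ := exists_isLatin_lt hm hmn
    exact ⟨R, hR, not_hasRainbow_of_lt hRn (by omega), not_hasRainbow_of_lt hRn (by omega)⟩
  · obtain ⟨R, hR, hRw⟩ := exists_isLatin_twoRowRainbowWidthLE hm n
    exact ⟨R, hR, hRw.not_hasRainbow (by omega),
      not_hasRainbow_of_card_lt (by rw [Fintype.card_fin]; omega)⟩
end

section
/- For positive integers m ≤ n with n ≥ ab, if there exists an m × n latin rectangle with no rainbow a × b subrectangle whenever m < b (via the projective-plane construction for a - 1 a prime power), and any coloring with fewer than ab symbols avoids rainbow a × b subrectangles, then for a - 1 a prime power and b ≥ a(a-1), the edge anti-Ramsey number satisfies AR_E(K_{a,b}) = a²(a-1)(b-1) + ab. -/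
/-!
Upper bound: in a latin rectangle with `a` rows, a column shares a symbol with at most
`a² - a + 1` columns (itself included), because each ordered pair of distinct rows `(i, i')`
determines at most one column `j'` with `R (i, j) = R (i', j')`. So as soon as
`n > (a² - a + 1)(b - 1)` one can greedily pick `b` columns with pairwise disjoint symbol sets,
and together with all rows they form a rainbow `a × b` subrectangle.

Lower bound: the cyclic `m × n` latin rectangle `(i + j) mod n` has only `n` symbols, so
rainbow-forcing needs `n ≥ ab` and `m ≥ a`. If moreover `mn < a²(a - 1)(b - 1) + ab`, then
`a(a - 1) ≤ b` forces `m < b`, and `m ≥ a` forces `n ≤ (a² - a + 1)(b - 1)`: exactly the range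
in which a latin rectangle without rainbow subrectangles is given.
-/

open Finset

variable {α β : Type*}

theorem HasRainbow.le_card_rows [Fintype α] {R : α × β → ℕ} {a b : ℕ} (h : HasRainbow R a b) :
    a ≤ Fintype.card α := by
  obtain ⟨rows, -, rfl, -⟩ := h
  exact card_le_univ rows

theorem exists_card_eq_pairwise_not_of_card_le [Fintype β] {r : β → β → Prop}
    (hr : ∀ j j', r j j' → r j' j) (N : β → Finset β) (hN_self : ∀ j, j ∈ N j)
    (hN : ∀ j j', r j j' → j' ∈ N j) {d : ℕ} (hd : ∀ j, #(N j) ≤ d) :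
    ∀ k, d * (k - 1) < Fintype.card β →
      ∃ s : Finset β, #s = k ∧ (s : Set β).Pairwise fun j j' => ¬ r j j' := by
  classical
  intro k
  induction k with
  | zero => exact fun _ => ⟨∅, by simp⟩
  | succ k ih =>
    intro hk
    obtain ⟨s, rfl, hs⟩ := ih ((Nat.mul_le_mul_left d (Nat.sub_le _ _)).trans_lt hk)
    have hcard : #(s.biUnion N) < #(univ : Finset β) := calc
      #(s.biUnion N) ≤ ∑ j ∈ s, #(N j) := card_biUnion_le
      _ ≤ #s • d := sum_le_card_nsmul _ _ _ fun j _ => hd j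
      _ < #(univ : Finset β) := by simpa [mul_comm] using hk
    obtain ⟨j, -, hj⟩ := exists_mem_notMem_of_card_lt_card hcard
    have hfar : ∀ j' ∈ s, ¬ r j' j := fun j' hj' h => hj (mem_biUnion.2 ⟨j', hj', hN j' j h⟩)
    have hjs : j ∉ s := fun h => hj (mem_biUnion.2 ⟨j, h, hN_self j⟩)
    refine ⟨insert j s, card_insert_of_notMem hjs, ?_⟩
    rw [coe_insert]
    exact hs.insert fun j' hj' _ => ⟨fun h => hfar j' hj' (hr _ _ h), hfar j' hj'⟩

theorem hasRainbow_of_isLatin [Fintype α] [Fintype β] {R : α × β → ℕ} (hR : IsLatin R) {b : ℕ}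
    (hb : (Fintype.card α ^ 2 - Fintype.card α + 1) * (b - 1) < Fintype.card β) :
    HasRainbow R (Fintype.card α) b := by
  classical
  let r : β → β → Prop := fun j j' => ∃ i i', R (i, j) = R (i', j')
  let B : β → Finset β := fun j =>
    (univ : Finset α).offDiag.biUnion fun p => {j' | R (p.1, j) = R (p.2, j')}
  let N : β → Finset β := fun j => insert j (B j)
  have hN : ∀ j j', r j j' → j' ∈ N j := by
    rintro j j' ⟨i, i', h⟩
    by_cases hii : i = i'
    · subst hii
      exact mem_insert.2 (Or.inl (hR.1 i j' j h.symm))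
    · exact mem_insert_of_mem (mem_biUnion.2 ⟨(i, i'), by simpa using hii, by simpa using h⟩)
  have hN_card : ∀ j, #(N j) ≤ Fintype.card α ^ 2 - Fintype.card α + 1 := by
    intro j
    have hle_one : ∀ p : α × α, #{j' | R (p.1, j) = R (p.2, j')} ≤ 1 := fun p =>
      card_le_one.2 fun j₁ h₁ j₂ h₂ => hR.1 p.2 j₁ j₂ <| by
        rw [mem_filter] at h₁ h₂
        rw [← h₁.2, h₂.2]
    calc #(N j) ≤ #(B j) + 1 := card_insert_le _ _
      _ ≤ #(univ : Finset α).offDiag • 1 + 1 := by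
          gcongr
          exact card_biUnion_le.trans (sum_le_card_nsmul _ _ _ fun p _ => hle_one p)
      _ = Fintype.card α ^ 2 - Fintype.card α + 1 := by simp [offDiag_card, sq]
  obtain ⟨cols, hcols, hpw⟩ := exists_card_eq_pairwise_not_of_card_le
    (fun _ _ ⟨i, i', h⟩ => ⟨i', i, h.symm⟩) N (fun j => mem_insert_self j _) hN hN_card b hb
  refine ⟨univ, cols, card_univ, hcols, ?_⟩
  rintro ⟨i, j⟩ hj ⟨i', j'⟩ hj' h
  simp only [coe_product, coe_univ, Set.mem_prod, Set.mem_univ, true_and, mem_coe] at hj hj'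
  obtain rfl : j = j' := by_contra fun hne => hpw hj hj' hne ⟨i, i', h⟩
  rw [hR.2 i i' j h]

theorem exists_isLatin_card_image_le {m n : ℕ} (h : m ≤ n) :
    ∃ R : Fin m × Fin n → ℕ, IsLatin R ∧ #(univ.image R) ≤ n := by
  refine ⟨fun p => (p.1 + p.2 : ℕ) % n, ⟨?_, ?_⟩, ?_⟩
  · intro i j j' hj
    exact Fin.ext (Nat.ModEq.add_left_cancel' i hj |>.eq_of_lt_of_lt j.2 j'.2)
  · intro i i' j hi
    exact Fin.ext (Nat.ModEq.add_right_cancel' j hi |>.eq_of_lt_of_lt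
      (i.2.trans_le h) (i'.2.trans_le h))
  · calc #(univ.image _) ≤ #(range n) :=
          card_le_card (image_subset_iff.2 fun p _ => mem_range.2 (Nat.mod_lt _ p.2.pos))
      _ = n := card_range n

theorem sq_mul_sub_one_mul_sub_one_add_mul_eq {a b : ℕ} (ha : 1 ≤ a) (hb : 1 ≤ b) :
    a ^ 2 * (a - 1) * (b - 1) + a * b = a * ((a ^ 2 - a + 1) * (b - 1) + 1) := by
  zify [ha, hb, show a ≤ a ^ 2 by nlinarith]
  ring

theorem sq_mul_sub_one_mul_sub_one_add_mul_le {a b : ℕ} (hb : a * (a - 1) ≤ b) :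
    a ^ 2 * (a - 1) * (b - 1) + a * b ≤ b * (a * b) := by
  rcases Nat.eq_zero_or_pos b with rfl | hb0
  · simp
  calc a ^ 2 * (a - 1) * (b - 1) + a * b = a * (a * (a - 1)) * (b - 1) + a * b := by ring
    _ ≤ a * b * (b - 1) + a * b := by gcongr
    _ = b * (a * b) := by
      obtain ⟨c, rfl⟩ := Nat.exists_eq_add_of_le' hb0
      simp only [Nat.add_sub_cancel]
      ring

theorem stmt_15_general (a b : ℕ) (ha : 2 ≤ a)
    (hb : a * (a - 1) ≤ b)
    (H1 : ∀ m n : ℕ, 0 < m → 0 < n → m < b → n ≤ (a ^ 2 - a + 1) * (b - 1) →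
      ∃ R : Fin m × Fin n → ℕ, IsLatin R ∧ ¬ HasRainbow R a b)
    (H2 : ∀ m n : ℕ, ∀ R : Fin m × Fin n → ℕ,
      (Finset.univ.image R).card < a * b →
      ¬ HasRainbow R a b ∧ ¬ HasRainbow R b a) :
    IsLeast {N : ℕ | ∃ m n : ℕ, 0 < m ∧ m ≤ n ∧ N = m * n ∧
        ∀ R : Fin m × Fin n → ℕ, IsLatin R → HasRainbow R a b ∨ HasRainbow R b a}
      (a ^ 2 * (a - 1) * (b - 1) + a * b) := by
  have hab : a ≤ b := (Nat.le_mul_of_pos_right a (by omega)).trans hb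
  have hbound := sq_mul_sub_one_mul_sub_one_add_mul_eq (a := a) (b := b) (by omega) (by omega)
  refine ⟨⟨a, (a ^ 2 - a + 1) * (b - 1) + 1, by omega, ?_, hbound, fun R hR => Or.inl ?_⟩, ?_⟩
  · have := Nat.le_mul_of_pos_left (b - 1) (show 0 < a ^ 2 - a + 1 by omega)
    omega
  · simpa using hasRainbow_of_isLatin hR (b := b) (by simp)
  rintro _ ⟨m, n, hm, hmn, rfl, hall⟩
  by_contra! hlt
  obtain ⟨R₀, hR₀, hR₀_card⟩ := exists_isLatin_card_image_le hmn
  have hma : a ≤ m := (hall R₀ hR₀).elim (by simpa using ·.le_card_rows)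
    fun h => hab.trans (by simpa using h.le_card_rows)
  have hnab : a * b ≤ n := by
    by_contra! h
    have := H2 m n R₀ (hR₀_card.trans_lt h)
    exact (hall R₀ hR₀).elim this.1 this.2
  have hmb : m < b := by
    by_contra! h
    have := sq_mul_sub_one_mul_sub_one_add_mul_le hb
    have := Nat.mul_le_mul h hnab
    omega
  have hnb : n ≤ (a ^ 2 - a + 1) * (b - 1) := by
    by_contra! h
    have : a * ((a ^ 2 - a + 1) * (b - 1) + 1) ≤ m * n := Nat.mul_le_mul hma h
    omega
  obtain ⟨R, hR, hR_no⟩ := H1 m n hm (hm.trans_le hmn) hmb hnb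
  exact (hall R hR).elim hR_no fun h => absurd (by simpa using h.le_card_rows) hmb.not_ge

theorem stmt_15 (a b : ℕ) (ha : 2 ≤ a)
    (hpp : IsPrimePow (a - 1) ∨ a - 1 = 1) (hb : a * (a - 1) ≤ b)
    (H1 : ∀ m n : ℕ, 0 < m → 0 < n → m < b → n ≤ (a ^ 2 - a + 1) * (b - 1) →
      ∃ R : Fin m × Fin n → ℕ, IsLatin R ∧ ¬ HasRainbow R a b)
    (H2 : ∀ m n : ℕ, ∀ R : Fin m × Fin n → ℕ,
      (Finset.univ.image R).card < a * b →
      ¬ HasRainbow R a b ∧ ¬ HasRainbow R b a) :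
    IsLeast {N : ℕ | ∃ m n : ℕ, 0 < m ∧ m ≤ n ∧ N = m * n ∧
        ∀ R : Fin m × Fin n → ℕ, IsLatin R → HasRainbow R a b ∨ HasRainbow R b a}
      (a ^ 2 * (a - 1) * (b - 1) + a * b) :=
  stmt_15_general a b ha hb H1 H2
end
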